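/- arXiv:2104.13835 — 3 statements merged into one kernel-verified Lean document; each statement's English description precedes it below -/
import Mathlib

section
/- For any finite lattice L, the congruence lattice Con L is a finite distributive lattice. -/
/-!
The join `y ⊔ z` of congruences is the transitive closure of `y ∪ z`, so a pair `(a, b)`
collapsed by `x ⊓ (y ⊔ z)` is joined by a chain of `y`- and `z`-steps. The unary polynomial
`t ↦ (t ⊔ (a ⊓ b)) ⊓ (a ⊔ b)` fixes `a` and `b` and maps this chain into the interval
`[a ⊓ b, a ⊔ b]`, which `x` collapses entirely; so every projected step lies in `x ⊓ y` or
`x ⊓ z`.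
-/

universe u

/-- A congruence of a lattice: an equivalence relation compatible with `⊔` and `⊓`. -/
structure LatticeCong (L : Type u) [Lattice L] : Type u where
  r : L → L → Prop
  refl : ∀ a, r a a
  symm : ∀ {a b}, r a b → r b a
  trans : ∀ {a b c}, r a b → r b c → r a c
  sup' : ∀ {a b c d}, r a b → r c d → r (a ⊔ c) (b ⊔ d)
  inf' : ∀ {a b c d}, r a b → r c d → r (a ⊓ c) (b ⊓ d)

namespace LatticeCong

variable {L : Type u} [Lattice L]

instance : PartialOrder (LatticeCong L) where
  le θ ψ := ∀ a b, θ.r a b → ψ.r a b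
  le_refl _ _ _ h := h
  le_trans _ _ _ h1 h2 a b h := h2 a b (h1 a b h)
  le_antisymm θ ψ h1 h2 := by
    cases θ; cases ψ
    simp only [mk.injEq]
    funext a b
    exact propext ⟨h1 a b, h2 a b⟩

instance : InfSet (LatticeCong L) :=
  ⟨fun S =>
    { r := fun a b => ∀ θ ∈ S, θ.r a b
      refl := fun a θ _ => θ.refl a
      symm := fun h θ hθ => θ.symm (h θ hθ)
      trans := fun h1 h2 θ hθ => θ.trans (h1 θ hθ) (h2 θ hθ)
      sup' := fun h1 h2 θ hθ => θ.sup' (h1 θ hθ) (h2 θ hθ)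
      inf' := fun h1 h2 θ hθ => θ.inf' (h1 θ hθ) (h2 θ hθ) }⟩

instance : CompleteLattice (LatticeCong L) :=
  completeLatticeOfInf _ (fun S =>
    ⟨fun θ hθ a b h => h θ hθ, fun ψ hψ a b h θ hθ => hψ hθ a b h⟩)

/-- The principal congruence generated by a pair `(a, b)`. -/
def gen (a b : L) : LatticeCong L := sInf {θ : LatticeCong L | θ.r a b}

/-- A congruence is principal if it is the smallest congruence collapsing some pair. -/
def IsPrincipal (θ : LatticeCong L) : Prop := ∃ a b : L, θ = gen a b

open Relation

theorem r_injective : Function.Injective (r : LatticeCong L → L → L → Prop) := by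
  rintro ⟨⟩ ⟨⟩ h
  congr

instance [Finite L] : Finite (LatticeCong L) :=
  Finite.of_injective _ r_injective

theorem inf_r_iff {θ ψ : LatticeCong L} {a b : L} : (θ ⊓ ψ).r a b ↔ θ.r a b ∧ ψ.r a b :=
  ⟨fun h => ⟨h θ (.inl rfl), h ψ (.inr rfl)⟩,
    fun ⟨hθ, hψ⟩ => by rintro _ (rfl | rfl) <;> assumption⟩

section Translation

variable (θ : LatticeCong L) {a b : L} (e : L)

theorem r_sup_right (h : θ.r a b) : θ.r (a ⊔ e) (b ⊔ e) := θ.sup' h (θ.refl e)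

theorem r_sup_left (h : θ.r a b) : θ.r (e ⊔ a) (e ⊔ b) := θ.sup' (θ.refl e) h

theorem r_inf_right (h : θ.r a b) : θ.r (a ⊓ e) (b ⊓ e) := θ.inf' h (θ.refl e)

theorem r_inf_left (h : θ.r a b) : θ.r (e ⊓ a) (e ⊓ b) := θ.inf' (θ.refl e) h

end Translation

theorem r_of_mem_Icc {θ : LatticeCong L} {c d s t : L} (h : θ.r c d)
    (hs : s ∈ Set.Icc c d) (ht : t ∈ Set.Icc c d) : θ.r s t := by
  have hsd : θ.r s d := by simpa [hs.1, hs.2] using θ.r_sup_left s h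
  have htd : θ.r t d := by simpa [ht.1, ht.2] using θ.r_sup_left t h
  exact θ.trans hsd (θ.symm htd)

theorem r_inf_sup {θ : LatticeCong L} {a b : L} (h : θ.r a b) : θ.r (a ⊓ b) (a ⊔ b) :=
  θ.trans (by simpa using θ.r_inf_right b h) (θ.symm (by simpa using θ.r_sup_right b h))

def supChain (β γ : LatticeCong L) : LatticeCong L where
  r := ReflTransGen fun a b => β.r a b ∨ γ.r a b
  refl _ := .refl
  symm h := ReflTransGen.mono (fun _ _ => Or.imp β.symm γ.symm) _ _ (ReflTransGen.swap _ _ h)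
  trans := .trans
  sup' {_ b c _} h1 h2 :=
    (ReflTransGen.lift (· ⊔ c)
        (fun _ _ => Or.imp (β.r_sup_right c) (γ.r_sup_right c)) _ _ h1).trans
      (ReflTransGen.lift (b ⊔ ·) (fun _ _ => Or.imp (β.r_sup_left b) (γ.r_sup_left b)) _ _ h2)
  inf' {_ b c _} h1 h2 :=
    (ReflTransGen.lift (· ⊓ c)
        (fun _ _ => Or.imp (β.r_inf_right c) (γ.r_inf_right c)) _ _ h1).trans
      (ReflTransGen.lift (b ⊓ ·) (fun _ _ => Or.imp (β.r_inf_left b) (γ.r_inf_left b)) _ _ h2)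

theorem sup_eq_supChain (β γ : LatticeCong L) : β ⊔ γ = supChain β γ := by
  refine le_antisymm (sup_le (fun _ _ h => .single (.inl h)) (fun _ _ h => .single (.inr h)))
    fun a b h => ?_
  induction h with
  | refl => exact (β ⊔ γ).refl a
  | tail _ hstep ih =>
    refine (β ⊔ γ).trans ih ?_
    rcases hstep with h | h
    · exact (le_sup_left : β ≤ β ⊔ γ) _ _ h
    · exact (le_sup_right : γ ≤ β ⊔ γ) _ _ h

theorem sup_r_iff {β γ : LatticeCong L} {a b : L} :
    (β ⊔ γ).r a b ↔ ReflTransGen (fun a b => β.r a b ∨ γ.r a b) a b := by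
  rw [sup_eq_supChain]; rfl

theorem inf_sup_le (x y z : LatticeCong L) : x ⊓ (y ⊔ z) ≤ x ⊓ y ⊔ x ⊓ z := by
  intro a b hab
  obtain ⟨hx, hyz⟩ := inf_r_iff.mp hab
  let m : L → L := fun t => (t ⊔ (a ⊓ b)) ⊓ (a ⊔ b)
  have hm : ∀ t, m t ∈ Set.Icc (a ⊓ b) (a ⊔ b) := fun _ =>
    ⟨le_inf le_sup_right inf_le_sup, inf_le_right⟩
  have hstep : ∀ s t, y.r s t ∨ z.r s t → (x ⊓ y ⊔ x ⊓ z).r (m s) (m t) := by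
    intro s t hst
    have hxst : x.r (m s) (m t) := r_of_mem_Icc (r_inf_sup hx) (hm s) (hm t)
    rcases hst with h | h
    · exact (le_sup_left : x ⊓ y ≤ _) _ _
        (inf_r_iff.mpr ⟨hxst, y.r_inf_right _ (y.r_sup_right _ h)⟩)
    · exact (le_sup_right : x ⊓ z ≤ _) _ _
        (inf_r_iff.mpr ⟨hxst, z.r_inf_right _ (z.r_sup_right _ h)⟩)
  have hchain := ReflTransGen.lift' m (fun s t h => sup_r_iff.mp (hstep s t h)) a b
    (sup_r_iff.mp hyz)
  simpa [m] using sup_r_iff.mpr hchain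

instance : DistribLattice (LatticeCong L) :=
  DistribLattice.ofInfSupLe inf_sup_le

end LatticeCong

/-- For a finite lattice `L`, the congruence lattice `Con L` is a finite
distributive lattice. -/
theorem stmt_2 (L : Type) [Lattice L] [Finite L] :
    Finite (LatticeCong L) ∧
      ∀ x y z : LatticeCong L, x ⊓ (y ⊔ z) = (x ⊓ y) ⊔ (x ⊓ z) :=
  ⟨inferInstance, fun x y z => inf_sup_left x y z⟩
end

section
/- If a covering square {a∧b, a, b, a∨b} of a lattice L is extended to a sublattice isomorphic to M3 by an added middle element, then in the resulting lattice the congruences con(a∧b, a) and con(a∧b, b) generated by the two sides of the square are equal. -/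
/-! If a congruence identifies `a ⊓ b` with `a`, joining with `m` identifies
`m = m ⊔ (a ⊓ b)` with `m ⊔ a = a ⊔ b`, and then meeting with `b` identifies
`m ⊓ b = a ⊓ b` with `(a ⊔ b) ⊓ b = b`. The same argument runs from `b` back to `a`. -/

universe u

/-- A congruence of a lattice: an equivalence relation compatible with `⊔` and `⊓`. -/
structure LatticeCon' (L : Type u) [Lattice L] : Type u where
  r : L → L → Prop
  refl : ∀ a, r a a
  symm : ∀ {a b}, r a b → r b a
  trans : ∀ {a b c}, r a b → r b c → r a c
  sup' : ∀ {a b c d}, r a b → r c d → r (a ⊔ c) (b ⊔ d)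
  inf' : ∀ {a b c d}, r a b → r c d → r (a ⊓ c) (b ⊓ d)

namespace LatticeCon'

variable {L : Type u} [Lattice L]

instance : PartialOrder (LatticeCon' L) where
  le θ ψ := ∀ a b, θ.r a b → ψ.r a b
  le_refl _ _ _ h := h
  le_trans _ _ _ h1 h2 a b h := h2 a b (h1 a b h)
  le_antisymm θ ψ h1 h2 := by
    cases θ; cases ψ
    simp only [mk.injEq]
    funext a b
    exact propext ⟨h1 a b, h2 a b⟩

instance : InfSet (LatticeCon' L) :=
  ⟨fun S =>
    { r := fun a b => ∀ θ ∈ S, θ.r a b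
      refl := fun a θ _ => θ.refl a
      symm := fun h θ hθ => θ.symm (h θ hθ)
      trans := fun h1 h2 θ hθ => θ.trans (h1 θ hθ) (h2 θ hθ)
      sup' := fun h1 h2 θ hθ => θ.sup' (h1 θ hθ) (h2 θ hθ)
      inf' := fun h1 h2 θ hθ => θ.inf' (h1 θ hθ) (h2 θ hθ) }⟩

instance : CompleteLattice (LatticeCon' L) :=
  completeLatticeOfInf _ (fun S =>
    ⟨fun θ hθ a b h => h θ hθ, fun ψ hψ a b h θ hθ => hψ hθ a b h⟩)

/-- The principal congruence generated by a pair `(a, b)`. -/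
def gen (a b : L) : LatticeCon' L := sInf {θ : LatticeCon' L | θ.r a b}

/-- A congruence is principal if it is the smallest congruence collapsing some pair. -/
def IsPrincipal (θ : LatticeCon' L) : Prop := ∃ a b : L, θ = gen a b

end LatticeCon'

namespace LatticeCon'

variable {L : Type*} [Lattice L]

theorem r_of_le_sup_of_inf_eq (θ : LatticeCon' L) {o x y m : L} (hom : o ≤ m)
    (hy : y ≤ m ⊔ x) (hmy : m ⊓ y = o) (hox : θ.r o x) : θ.r o y := by
  have hup : θ.r m (m ⊔ x) := by
    simpa only [sup_eq_left.2 hom] using θ.sup' (θ.refl m) hox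
  simpa only [hmy, inf_eq_right.2 hy] using θ.inf' hup (θ.refl y)

end LatticeCon'

theorem stmt_7_general (L : Type) [Lattice L] (a b m : L)
    (hma : m ⊓ a = a ⊓ b) (hma' : m ⊔ a = a ⊔ b)
    (hmb : m ⊓ b = a ⊓ b) (hmb' : m ⊔ b = a ⊔ b) :
    LatticeCon'.gen (a ⊓ b) a = LatticeCon'.gen (a ⊓ b) b := by
  have hm : a ⊓ b ≤ m := hma ▸ inf_le_left
  have hb : b ≤ m ⊔ a := hma' ▸ le_sup_right
  have ha : a ≤ m ⊔ b := hmb' ▸ le_sup_left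
  unfold LatticeCon'.gen
  congr 1
  ext θ
  exact ⟨θ.r_of_le_sup_of_inf_eq hm hb hmb, θ.r_of_le_sup_of_inf_eq hm ha hma⟩

/-- If a covering square `{a ⊓ b, a, b, a ⊔ b}` of a lattice is completed
to an `M₃` by a middle element `m`, then the congruences generated by the two sides of
the square coincide. -/
theorem stmt_7 (L : Type) [Lattice L] (a b m : L) (hab : a ≠ b)
    (ha : a ⊓ b ⋖ a) (hb : a ⊓ b ⋖ b)
    (hm1 : a ⊓ b ⋖ m) (hm2 : m ⋖ a ⊔ b)
    (hma : m ⊓ a = a ⊓ b) (hma' : m ⊔ a = a ⊔ b)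
    (hmb : m ⊓ b = a ⊓ b) (hmb' : m ⊔ b = a ⊔ b) :
    LatticeCon'.gen (a ⊓ b) a = LatticeCon'.gen (a ⊓ b) b :=
  stmt_7_general L a b m hma hma' hmb hmb'
end

section
/- Let L1 and L2 be finite lattices such that a filter F of L1 is isomorphic to an ideal I of L2, and let L be their gluing over this isomorphism. Then every congruence of L restricts to congruences of L1 and L2 that agree on F ≅ I, and conversely every such compatible pair of congruences arises from a unique congruence of L. -/
universe u

/-- A congruence of a lattice: an equivalence relation compatible with `⊔` and `⊓`. -/
structure LatticeCongr (L : Type u) [Lattice L] : Type u where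
  r : L → L → Prop
  refl : ∀ a, r a a
  symm : ∀ {a b}, r a b → r b a
  trans : ∀ {a b c}, r a b → r b c → r a c
  sup' : ∀ {a b c d}, r a b → r c d → r (a ⊔ c) (b ⊔ d)
  inf' : ∀ {a b c d}, r a b → r c d → r (a ⊓ c) (b ⊓ d)

namespace LatticeCongr

variable {L : Type u} [Lattice L]

instance : PartialOrder (LatticeCongr L) where
  le θ ψ := ∀ a b, θ.r a b → ψ.r a b
  le_refl _ _ _ h := h
  le_trans _ _ _ h1 h2 a b h := h2 a b (h1 a b h)
  le_antisymm θ ψ h1 h2 := by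
    cases θ; cases ψ
    simp only [mk.injEq]
    funext a b
    exact propext ⟨h1 a b, h2 a b⟩

instance : InfSet (LatticeCongr L) :=
  ⟨fun S =>
    { r := fun a b => ∀ θ ∈ S, θ.r a b
      refl := fun a θ _ => θ.refl a
      symm := fun h θ hθ => θ.symm (h θ hθ)
      trans := fun h1 h2 θ hθ => θ.trans (h1 θ hθ) (h2 θ hθ)
      sup' := fun h1 h2 θ hθ => θ.sup' (h1 θ hθ) (h2 θ hθ)
      inf' := fun h1 h2 θ hθ => θ.inf' (h1 θ hθ) (h2 θ hθ) }⟩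

instance : CompleteLattice (LatticeCongr L) :=
  completeLatticeOfInf _ (fun S =>
    ⟨fun θ hθ a b h => h θ hθ, fun ψ hψ a b h θ hθ => hψ hθ a b h⟩)

/-- The principal congruence generated by a pair `(a, b)`. -/
def gen (a b : L) : LatticeCongr L := sInf {θ : LatticeCongr L | θ.r a b}

/-- A congruence is principal if it is the smallest congruence collapsing some pair. -/
def IsPrincipal (θ : LatticeCongr L) : Prop := ∃ a b : L, θ = gen a b

end LatticeCongr

/-- Restriction of a lattice congruence to a sublattice. -/
def LatticeCongr.restrict {L : Type u} [Lattice L] (S : Sublattice L)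
    (θ : LatticeCongr L) : LatticeCongr S where
  r a b := θ.r a b
  refl a := θ.refl a
  symm h := θ.symm h
  trans h1 h2 := θ.trans h1 h2
  sup' {a b c d} h1 h2 := by
    simpa only [Sublattice.coe_sup] using θ.sup' h1 h2
  inf' {a b c d} h1 h2 := by
    simpa only [Sublattice.coe_inf] using θ.inf' h1 h2

/-! A congruence of the glued lattice is determined by the intervals `[a, b]` it collapses.
Such an interval lies in `L1`, or lies in `L2`, or climbs from `L1` into `L2` through a point `m`
of the overlap; so the congruence is recovered from its two restrictions as
"`a ≡ b` iff `a ≡₁ m ≡₂ b` for some `m ∈ [a, b]`". Conversely, for a compatible pair this recipe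
defines a congruence: a chain of such steps collapses back to two steps because `L1` is
down-closed and `L2` is up-closed, and a `θ1`-step joined with an element outside `L1` is carried
into `L2` by first joining it with an element of the overlap. -/

namespace LatticeCongr

variable {L : Type*} [Lattice L]

theorem ext {θ ψ : LatticeCongr L} (h : ∀ a b, θ.r a b ↔ ψ.r a b) : θ = ψ :=
  le_antisymm (fun a b => (h a b).1) (fun a b => (h a b).2)

theorem r_of_mem_Icc (θ : LatticeCongr L) {a b c : L} (h : θ.r a b) (hac : a ≤ c) (hcb : c ≤ b) :
    θ.r a c ∧ θ.r c b :=
  ⟨by simpa [inf_eq_left.2 hac, inf_eq_right.2 hcb] using θ.inf' h (θ.refl c),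
    by simpa [sup_eq_right.2 hac, sup_eq_left.2 hcb] using θ.sup' h (θ.refl c)⟩

theorem r_iff_r_inf_sup (θ : LatticeCongr L) {a b : L} : θ.r a b ↔ θ.r (a ⊓ b) (a ⊔ b) := by
  refine ⟨fun h => θ.trans (b := b) ?_ ?_, fun h => ?_⟩
  · simpa using θ.inf' h (θ.refl b)
  · simpa using θ.sup' (θ.symm h) (θ.refl b)
  · exact θ.trans (θ.symm (θ.r_of_mem_Icc h inf_le_left le_sup_left).1)
      (θ.r_of_mem_Icc h inf_le_right le_sup_right).1

variable {S : Sublattice L}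

def LiftRel (θ : LatticeCongr S) (x y : L) : Prop :=
  ∃ (hx : x ∈ S) (hy : y ∈ S), θ.r ⟨x, hx⟩ ⟨y, hy⟩

variable {θ : LatticeCongr S} {a b c : L}

theorem liftRel_coe {x y : S} : θ.LiftRel x y ↔ θ.r x y :=
  ⟨fun ⟨_, _, h⟩ => h, fun h => ⟨x.2, y.2, h⟩⟩

theorem liftRel_refl (θ : LatticeCongr S) (ha : a ∈ S) : θ.LiftRel a a := ⟨ha, ha, θ.refl _⟩

theorem LiftRel.mem_left (h : θ.LiftRel a b) : a ∈ S := h.1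

theorem LiftRel.mem_right (h : θ.LiftRel a b) : b ∈ S := h.2.1

theorem LiftRel.trans (h₁ : θ.LiftRel a b) (h₂ : θ.LiftRel b c) : θ.LiftRel a c :=
  ⟨h₁.1, h₂.2.1, θ.trans h₁.2.2 h₂.2.2⟩

theorem LiftRel.sup_right (h : θ.LiftRel a b) (hc : c ∈ S) : θ.LiftRel (a ⊔ c) (b ⊔ c) :=
  ⟨S.supClosed h.1 hc, S.supClosed h.2.1 hc, θ.sup' h.2.2 (θ.refl ⟨c, hc⟩)⟩

theorem LiftRel.inf_right (h : θ.LiftRel a b) (hc : c ∈ S) : θ.LiftRel (a ⊓ c) (b ⊓ c) :=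
  ⟨S.infClosed h.1 hc, S.infClosed h.2.1 hc, θ.inf' h.2.2 (θ.refl ⟨c, hc⟩)⟩

end LatticeCongr

/-- Grätzer's criterion: a relation on comparable pairs with these properties is the restriction to
comparable pairs of the congruence `IntervalCongr.toLatticeCongr`. -/
structure IntervalCongr (L : Type*) [Lattice L] where
  R : L → L → Prop
  refl : ∀ a, R a a
  trans : ∀ {a b c}, a ≤ b → b ≤ c → R a b → R b c → R a c
  sup_right : ∀ {a b} (c), a ≤ b → R a b → R (a ⊔ c) (b ⊔ c)
  inf_right : ∀ {a b} (c), a ≤ b → R a b → R (a ⊓ c) (b ⊓ c)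

namespace IntervalCongr

variable {L : Type*} [Lattice L] (R : IntervalCongr L)

theorem of_le_of_le {a a' b' b : L} (h : R.R a b) (ha : a ≤ a') (hab : a' ≤ b') (hb : b' ≤ b) :
    R.R a' b' := by
  have h' : R.R a' b := by
    simpa [sup_eq_right.2 ha, sup_eq_left.2 (hab.trans hb)] using
      R.sup_right a' (ha.trans (hab.trans hb)) h
  simpa [inf_eq_left.2 hab, inf_eq_right.2 hb] using R.inf_right b' (hab.trans hb) h'

theorem trans_inf_sup {x y z : L} (hxy : R.R (x ⊓ y) (x ⊔ y)) (hyz : R.R (y ⊓ z) (y ⊔ z)) :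
    R.R (x ⊓ z) (x ⊔ z) := by
  have h₁ : R.R (x ⊓ y ⊓ z) (x ⊓ y) := by
    convert R.inf_right (x ⊓ y) inf_le_sup hyz using 1 <;> simp [inf_comm, inf_left_comm]
  have h₂ : R.R (x ⊓ y) y := by simpa using R.inf_right y inf_le_sup hxy
  have h₃ : R.R y (x ⊔ y) := by simpa using R.sup_right y inf_le_sup hxy
  have h₄ : R.R (x ⊔ y) (x ⊔ y ⊔ z) := by
    convert R.sup_right (x ⊔ y) inf_le_sup hyz using 1 <;> simp [sup_comm, sup_left_comm]
  have h : R.R (x ⊓ y ⊓ z) (x ⊔ y ⊔ z) :=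
    R.trans (inf_le_left.trans inf_le_right) (le_sup_right.trans le_sup_left)
      (R.trans inf_le_left inf_le_right h₁ h₂) (R.trans le_sup_right le_sup_left h₃ h₄)
  exact R.of_le_of_le h (le_inf (inf_le_left.trans inf_le_left) inf_le_right) inf_le_sup
    (sup_le (le_sup_left.trans le_sup_left) le_sup_right)

theorem sup_right_inf_sup {x y : L} (c : L) (h : R.R (x ⊓ y) (x ⊔ y)) :
    R.R ((x ⊔ c) ⊓ (y ⊔ c)) ((x ⊔ c) ⊔ (y ⊔ c)) :=
  R.of_le_of_le (R.sup_right c inf_le_sup h)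
    (le_inf (sup_le_sup_right inf_le_left c) (sup_le_sup_right inf_le_right c)) inf_le_sup
    (sup_le (sup_le_sup_right le_sup_left c) (sup_le_sup_right le_sup_right c))

theorem inf_right_inf_sup {x y : L} (c : L) (h : R.R (x ⊓ y) (x ⊔ y)) :
    R.R ((x ⊓ c) ⊓ (y ⊓ c)) ((x ⊓ c) ⊔ (y ⊓ c)) :=
  R.of_le_of_le (R.inf_right c inf_le_sup h)
    (le_inf (inf_le_inf_right c inf_le_left) (inf_le_inf_right c inf_le_right)) inf_le_sup
    (sup_le (inf_le_inf_right c le_sup_left) (inf_le_inf_right c le_sup_right))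

def toLatticeCongr : LatticeCongr L where
  r x y := R.R (x ⊓ y) (x ⊔ y)
  refl x := by simpa using R.refl x
  symm {x y} h := by rwa [inf_comm, sup_comm]
  trans := R.trans_inf_sup
  sup' {a b c d} h₁ h₂ := R.trans_inf_sup (R.sup_right_inf_sup c h₁) (by
    simpa only [sup_comm _ b] using R.sup_right_inf_sup b h₂)
  inf' {a b c d} h₁ h₂ := R.trans_inf_sup (R.inf_right_inf_sup c h₁) (by
    simpa only [inf_comm _ b] using R.inf_right_inf_sup b h₂)

end IntervalCongr

open LatticeCongr

section Gluing

variable {L : Type*} [Lattice L] {L1 L2 : Sublattice L}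

structure IsGluing (L1 L2 : Sublattice L) : Prop where
  mem_or_mem : ∀ x, x ∈ L1 ∨ x ∈ L2
  isLowerSet : IsLowerSet (L1 : Set L)
  isUpperSet : IsUpperSet (L2 : Set L)
  inter_nonempty : ((L1 : Set L) ∩ L2).Nonempty

def AgreeOnInter (θ1 : LatticeCongr L1) (θ2 : LatticeCongr L2) : Prop :=
  ∀ (x y : L) (hx1 : x ∈ L1) (hx2 : x ∈ L2) (hy1 : y ∈ L1) (hy2 : y ∈ L2),
    θ1.r ⟨x, hx1⟩ ⟨y, hy1⟩ ↔ θ2.r ⟨x, hx2⟩ ⟨y, hy2⟩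

def GlueStep (θ1 : LatticeCongr L1) (θ2 : LatticeCongr L2) (x y : L) : Prop :=
  θ1.LiftRel x y ∨ θ2.LiftRel x y

/-- Meant for `a ≤ b`: the glued congruence collapses `[a, b]`. -/
def GlueCollapses (θ1 : LatticeCongr L1) (θ2 : LatticeCongr L2) (a b : L) : Prop :=
  ∃ m, a ≤ m ∧ m ≤ b ∧ GlueStep θ1 θ2 a m ∧ GlueStep θ1 θ2 m b

variable {θ1 : LatticeCongr L1} {θ2 : LatticeCongr L2} {a b x y z w : L}

theorem AgreeOnInter.liftRel_iff (hθ : AgreeOnInter θ1 θ2) (hx1 : x ∈ L1) (hx2 : x ∈ L2)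
    (hy1 : y ∈ L1) (hy2 : y ∈ L2) : θ1.LiftRel x y ↔ θ2.LiftRel x y :=
  ⟨fun ⟨_, _, h⟩ => ⟨hx2, hy2, (hθ x y hx1 hx2 hy1 hy2).1 h⟩,
    fun ⟨_, _, h⟩ => ⟨hx1, hy1, (hθ x y hx1 hx2 hy1 hy2).2 h⟩⟩

theorem glueStep_refl (hG : IsGluing L1 L2) (x : L) : GlueStep θ1 θ2 x x :=
  (hG.mem_or_mem x).imp (liftRel_refl θ1) (liftRel_refl θ2)

theorem GlueStep.liftRel_left (hθ : AgreeOnInter θ1 θ2) (h : GlueStep θ1 θ2 x y)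
    (hx : x ∈ L1) (hy : y ∈ L1) : θ1.LiftRel x y :=
  h.elim id fun h => (hθ.liftRel_iff hx h.mem_left hy h.mem_right).2 h

theorem GlueStep.liftRel_right (hθ : AgreeOnInter θ1 θ2) (h : GlueStep θ1 θ2 x y)
    (hx : x ∈ L2) (hy : y ∈ L2) : θ2.LiftRel x y :=
  h.elim (fun h => (hθ.liftRel_iff h.mem_left hx h.mem_right hy).1 h) id

theorem GlueCollapses.of_liftRel_left (h : θ1.LiftRel a b) (hab : a ≤ b) :
    GlueCollapses θ1 θ2 a b :=
  ⟨b, hab, le_rfl, .inl h, .inl (liftRel_refl θ1 h.mem_right)⟩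

theorem GlueCollapses.of_liftRel_right (h : θ2.LiftRel a b) (hab : a ≤ b) :
    GlueCollapses θ1 θ2 a b :=
  ⟨a, le_rfl, hab, .inr (liftRel_refl θ2 h.mem_left), .inr h⟩

theorem glueCollapses_iff_left (hG : IsGluing L1 L2) (hθ : AgreeOnInter θ1 θ2) (hab : a ≤ b)
    (hb : b ∈ L1) : GlueCollapses θ1 θ2 a b ↔ θ1.LiftRel a b := by
  refine ⟨fun ⟨m, ham, hmb, h₁, h₂⟩ => ?_, fun h => .of_liftRel_left h hab⟩
  have hm : m ∈ L1 := hG.isLowerSet hmb hb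
  exact (h₁.liftRel_left hθ (hG.isLowerSet ham hm) hm).trans (h₂.liftRel_left hθ hm hb)

theorem glueCollapses_iff_right (hG : IsGluing L1 L2) (hθ : AgreeOnInter θ1 θ2) (hab : a ≤ b)
    (ha : a ∈ L2) : GlueCollapses θ1 θ2 a b ↔ θ2.LiftRel a b := by
  refine ⟨fun ⟨m, ham, hmb, h₁, h₂⟩ => ?_, fun h => .of_liftRel_right h hab⟩
  have hm : m ∈ L2 := hG.isUpperSet ham ha
  exact (h₁.liftRel_right hθ ha hm).trans (h₂.liftRel_right hθ hm (hG.isUpperSet hmb hm))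

/-- Three increasing steps can be shortened to two: all points up to the last one in `L1` are
`θ1`-related, and from there on every step is a `θ2`-step. -/
theorem GlueCollapses.of_glueStep_three (hG : IsGluing L1 L2) (hθ : AgreeOnInter θ1 θ2)
    (hxy : x ≤ y) (hyz : y ≤ z) (hzw : z ≤ w) (h₁ : GlueStep θ1 θ2 x y)
    (h₂ : GlueStep θ1 θ2 y z) (h₃ : GlueStep θ1 θ2 z w) : GlueCollapses θ1 θ2 x w := by
  by_cases hz : z ∈ L1
  · have hy : y ∈ L1 := hG.isLowerSet hyz hz
    exact ⟨z, hxy.trans hyz, hzw,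
      .inl ((h₁.liftRel_left hθ (hG.isLowerSet hxy hy) hy).trans (h₂.liftRel_left hθ hy hz)), h₃⟩
  · have h₂' : θ2.LiftRel y z := h₂.resolve_left fun h => hz h.mem_right
    exact ⟨y, hxy, hyz.trans hzw, h₁,
      .inr (h₂'.trans (h₃.liftRel_right hθ h₂'.mem_right (hG.isUpperSet hzw h₂'.mem_right)))⟩

theorem GlueCollapses.trans (hG : IsGluing L1 L2) (hθ : AgreeOnInter θ1 θ2)
    (h₁ : GlueCollapses θ1 θ2 x y) (h₂ : GlueCollapses θ1 θ2 y z) : GlueCollapses θ1 θ2 x z := by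
  obtain ⟨m, hxm, hmy, e₁, e₂⟩ := h₁
  obtain ⟨n, hyn, hnz, e₃, e₄⟩ := h₂
  obtain ⟨k, hxk, hkn, e₅, e₆⟩ := of_glueStep_three hG hθ hxm hmy hyn e₁ e₂ e₃
  exact of_glueStep_three hG hθ hxk hkn hnz e₅ e₆ e₄

/-- A `θ1`-step joined with `c ∉ L1` becomes a `θ2`-step once it has first been joined with an
element of the overlap below `x ⊔ c`. -/
theorem GlueStep.sup_right (hG : IsGluing L1 L2) (hθ : AgreeOnInter θ1 θ2) (hxy : x ≤ y)
    (h : GlueStep θ1 θ2 x y) (c : L) : GlueCollapses θ1 θ2 (x ⊔ c) (y ⊔ c) := by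
  have hxyc : x ⊔ c ≤ y ⊔ c := sup_le_sup_right hxy c
  rcases h with h | h
  · by_cases hc : c ∈ L1
    · exact .of_liftRel_left (h.sup_right hc) hxyc
    obtain ⟨u, hu1, hu2⟩ := hG.inter_nonempty
    have hc2 : c ∈ L2 := (hG.mem_or_mem c).resolve_left hc
    have hw : u ⊓ (x ⊔ c) ≤ x ⊔ c := inf_le_right
    have hw2 : u ⊓ (x ⊔ c) ∈ L2 := L2.infClosed hu2 (hG.isUpperSet le_sup_right hc2)
    have h₁ := h.sup_right (hG.isLowerSet inf_le_left hu1 : u ⊓ (x ⊔ c) ∈ L1)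
    have h₂ := ((hθ.liftRel_iff h₁.mem_left (hG.isUpperSet le_sup_right hw2) h₁.mem_right
      (hG.isUpperSet le_sup_right hw2)).1 h₁).sup_right hc2
    rw [sup_right_comm x, sup_eq_left.2 hw, sup_right_comm y, sup_eq_left.2 (hw.trans hxyc)] at h₂
    exact .of_liftRel_right h₂ hxyc
  · have h' := h.sup_right (hG.isUpperSet le_sup_left h.mem_left : x ⊔ c ∈ L2)
    rw [← sup_assoc, sup_idem, ← sup_assoc, sup_eq_left.2 hxy] at h'
    exact .of_liftRel_right h' hxyc

theorem GlueStep.inf_right (hG : IsGluing L1 L2) (hθ : AgreeOnInter θ1 θ2) (hxy : x ≤ y)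
    (h : GlueStep θ1 θ2 x y) (c : L) : GlueCollapses θ1 θ2 (x ⊓ c) (y ⊓ c) := by
  have hxyc : x ⊓ c ≤ y ⊓ c := inf_le_inf_right c hxy
  rcases h with h | h
  · have h' := h.inf_right (hG.isLowerSet inf_le_left h.mem_right : y ⊓ c ∈ L1)
    rw [← inf_assoc, inf_eq_left.2 hxy, ← inf_assoc, inf_idem] at h'
    exact .of_liftRel_left h' hxyc
  · by_cases hc : c ∈ L2
    · exact .of_liftRel_right (h.inf_right hc) hxyc
    obtain ⟨u, hu1, hu2⟩ := hG.inter_nonempty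
    have hc1 : c ∈ L1 := (hG.mem_or_mem c).resolve_right hc
    have hw : y ⊓ c ≤ u ⊔ y ⊓ c := le_sup_right
    have hw1 : u ⊔ y ⊓ c ∈ L1 := L1.supClosed hu1 (hG.isLowerSet inf_le_right hc1)
    have h₁ := h.inf_right (hG.isUpperSet le_sup_left hu2 : u ⊔ y ⊓ c ∈ L2)
    have h₂ := ((hθ.liftRel_iff (hG.isLowerSet inf_le_right hw1) h₁.mem_left
      (hG.isLowerSet inf_le_right hw1) h₁.mem_right).2 h₁).inf_right hc1
    rw [inf_right_comm x, inf_eq_left.2 (hxyc.trans hw), inf_right_comm y, inf_eq_left.2 hw] at h₂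
    exact .of_liftRel_left h₂ hxyc

theorem GlueCollapses.sup_right (hG : IsGluing L1 L2) (hθ : AgreeOnInter θ1 θ2)
    (h : GlueCollapses θ1 θ2 a b) (c : L) : GlueCollapses θ1 θ2 (a ⊔ c) (b ⊔ c) :=
  let ⟨_, ham, hmb, h₁, h₂⟩ := h
  (h₁.sup_right hG hθ ham c).trans hG hθ (h₂.sup_right hG hθ hmb c)

theorem GlueCollapses.inf_right (hG : IsGluing L1 L2) (hθ : AgreeOnInter θ1 θ2)
    (h : GlueCollapses θ1 θ2 a b) (c : L) : GlueCollapses θ1 θ2 (a ⊓ c) (b ⊓ c) :=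
  let ⟨_, ham, hmb, h₁, h₂⟩ := h
  (h₁.inf_right hG hθ ham c).trans hG hθ (h₂.inf_right hG hθ hmb c)

def glueIntervalCongr (hG : IsGluing L1 L2) (hθ : AgreeOnInter θ1 θ2) : IntervalCongr L where
  R := GlueCollapses θ1 θ2
  refl x := ⟨x, le_rfl, le_rfl, glueStep_refl hG x, glueStep_refl hG x⟩
  trans _ _ := GlueCollapses.trans hG hθ
  sup_right c _ h := h.sup_right hG hθ c
  inf_right c _ h := h.inf_right hG hθ c

def glue (hG : IsGluing L1 L2) (hθ : AgreeOnInter θ1 θ2) : LatticeCongr L :=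
  (glueIntervalCongr hG hθ).toLatticeCongr

theorem restrict_glue_left (hG : IsGluing L1 L2) (hθ : AgreeOnInter θ1 θ2) :
    (glue hG hθ).restrict L1 = θ1 :=
  LatticeCongr.ext fun p q => by
    change GlueCollapses θ1 θ2 (↑p ⊓ ↑q) (↑p ⊔ ↑q) ↔ θ1.r p q
    rw [glueCollapses_iff_left hG hθ inf_le_sup (L1.supClosed p.2 q.2), θ1.r_iff_r_inf_sup]
    exact liftRel_coe (x := p ⊓ q) (y := p ⊔ q)

theorem restrict_glue_right (hG : IsGluing L1 L2) (hθ : AgreeOnInter θ1 θ2) :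
    (glue hG hθ).restrict L2 = θ2 :=
  LatticeCongr.ext fun p q => by
    change GlueCollapses θ1 θ2 (↑p ⊓ ↑q) (↑p ⊔ ↑q) ↔ θ2.r p q
    rw [glueCollapses_iff_right hG hθ inf_le_sup (L2.infClosed p.2 q.2), θ2.r_iff_r_inf_sup]
    exact liftRel_coe (x := p ⊓ q) (y := p ⊔ q)

theorem eq_glue (hG : IsGluing L1 L2) (hθ : AgreeOnInter θ1 θ2) {ψ : LatticeCongr L}
    (h1 : ψ.restrict L1 = θ1) (h2 : ψ.restrict L2 = θ2) : ψ = glue hG hθ := by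
  subst h1 h2
  have of_step : ∀ {x y}, GlueStep (ψ.restrict L1) (ψ.restrict L2) x y → ψ.r x y := by
    rintro x y (⟨_, _, h⟩ | ⟨_, _, h⟩) <;> exact h
  have to_step : ∀ {x y}, x ≤ y → ψ.r x y → y ∈ L1 ∨ x ∈ L2 →
      GlueStep (ψ.restrict L1) (ψ.restrict L2) x y := by
    rintro x y hxy h (hy | hx)
    · exact .inl ⟨hG.isLowerSet hxy hy, hy, h⟩
    · exact .inr ⟨hx, hG.isUpperSet hxy hx, h⟩
  obtain ⟨u, hu1, hu2⟩ := hG.inter_nonempty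
  refine LatticeCongr.ext fun x y => ψ.r_iff_r_inf_sup.trans
    ⟨fun h => ?_, fun ⟨_, _, _, h₁, h₂⟩ => ψ.trans (of_step h₁) (of_step h₂)⟩
  -- the midpoint `x ⊓ y ⊔ u ⊓ (x ⊔ y)` lies in `L1` if `x ⊓ y` does and in `L2` if `x ⊔ y` does
  have hlo : x ⊓ y ≤ x ⊓ y ⊔ u ⊓ (x ⊔ y) := le_sup_left
  have hhi : x ⊓ y ⊔ u ⊓ (x ⊔ y) ≤ x ⊔ y := sup_le inf_le_sup inf_le_right
  obtain ⟨h₁, h₂⟩ := ψ.r_of_mem_Icc h hlo hhi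
  refine ⟨_, hlo, hhi, to_step hlo h₁ ?_, to_step hhi h₂ ?_⟩
  · exact (hG.mem_or_mem _).imp (fun ha => L1.supClosed ha (hG.isLowerSet inf_le_left hu1)) id
  · exact (hG.mem_or_mem _).imp id fun hb => hG.isUpperSet le_sup_right (L2.infClosed hu2 hb)

end Gluing

theorem stmt_17_general (L : Type) [Lattice L] (L1 L2 : Sublattice L)
    (hcover : (L1 : Set L) ∪ (L2 : Set L) = Set.univ)
    (hdown : IsLowerSet (L1 : Set L)) (hup : IsUpperSet (L2 : Set L))
    (hne : ((L1 : Set L) ∩ (L2 : Set L)).Nonempty) :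
    (∀ θ : LatticeCongr L, ∀ (x y : L) (hx1 : x ∈ L1) (hx2 : x ∈ L2)
        (hy1 : y ∈ L1) (hy2 : y ∈ L2),
        (θ.restrict L1).r ⟨x, hx1⟩ ⟨y, hy1⟩ ↔ (θ.restrict L2).r ⟨x, hx2⟩ ⟨y, hy2⟩) ∧
      ∀ (θ1 : LatticeCongr L1) (θ2 : LatticeCongr L2),
        (∀ (x y : L) (hx1 : x ∈ L1) (hx2 : x ∈ L2) (hy1 : y ∈ L1) (hy2 : y ∈ L2),
          θ1.r ⟨x, hx1⟩ ⟨y, hy1⟩ ↔ θ2.r ⟨x, hx2⟩ ⟨y, hy2⟩) →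
        ∃! θ : LatticeCongr L, θ.restrict L1 = θ1 ∧ θ.restrict L2 = θ2 := by
  have hG : IsGluing L1 L2 := ⟨fun x => Set.eq_univ_iff_forall.1 hcover x, hdown, hup, hne⟩
  refine ⟨fun θ x y _ _ _ _ => Iff.rfl, fun θ1 θ2 hθ => ?_⟩
  exact ⟨glue hG hθ, ⟨restrict_glue_left hG hθ, restrict_glue_right hG hθ⟩,
    fun ψ hψ => eq_glue hG hθ hψ.1 hψ.2⟩

/-- Let `L` be the gluing of the finite lattices `L₁` and `L₂`, i.e.
`L₁` is an ideal of `L`, `L₂` is a filter of `L`, they cover `L`, and they meet in a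
nonempty set `F`.  Then every congruence of `L` restricts to congruences of `L₁` and
`L₂` agreeing on `F`, and conversely every pair of congruences of `L₁` and `L₂`
agreeing on `F` arises from a unique congruence of `L`. -/
theorem stmt_17 (L : Type) [Lattice L] [Finite L] (L1 L2 : Sublattice L)
    (hcover : (L1 : Set L) ∪ (L2 : Set L) = Set.univ)
    (hdown : IsLowerSet (L1 : Set L)) (hup : IsUpperSet (L2 : Set L))
    (hne : ((L1 : Set L) ∩ (L2 : Set L)).Nonempty) :
    (∀ θ : LatticeCongr L, ∀ (x y : L) (hx1 : x ∈ L1) (hx2 : x ∈ L2)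
        (hy1 : y ∈ L1) (hy2 : y ∈ L2),
        (θ.restrict L1).r ⟨x, hx1⟩ ⟨y, hy1⟩ ↔ (θ.restrict L2).r ⟨x, hx2⟩ ⟨y, hy2⟩) ∧
      ∀ (θ1 : LatticeCongr L1) (θ2 : LatticeCongr L2),
        (∀ (x y : L) (hx1 : x ∈ L1) (hx2 : x ∈ L2) (hy1 : y ∈ L1) (hy2 : y ∈ L2),
          θ1.r ⟨x, hx1⟩ ⟨y, hy1⟩ ↔ θ2.r ⟨x, hx2⟩ ⟨y, hy2⟩) →
        ∃! θ : LatticeCongr L, θ.restrict L1 = θ1 ∧ θ.restrict L2 = θ2 :=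
  stmt_17_general L L1 L2 hcover hdown hup hne
end
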